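/- arXiv:2105.01781 — 2 statements merged into one kernel-verified Lean document; each statement's English description precedes it below -/
import Mathlib

section
/- For any x, y ∈ ℝⁿ and any ε ≥ 0, if z is an ε-projection of x onto C (i.e. z ∈ C and ⟨x − z, w − z⟩ ≤ ε for all w ∈ C) and P_C(y) denotes the exact orthogonal projection of y onto C, then ‖z − P_C(y)‖ ≤ ‖x − y‖ + √ε. -/
open Metric
open scoped RealInnerProductSpace

theorem inexact_proj_dist_exact_proj (n : ℕ) (C : Set (EuclideanSpace ℝ (Fin n)))
    (hC : C.Nonempty) (hCc : IsClosed C) (hCv : Convex ℝ C)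
    (x y z p : EuclideanSpace ℝ (Fin n)) (ε : ℝ) (hε : 0 ≤ ε)
    (hzC : z ∈ C) (hz : ∀ w ∈ C, ⟪x - z, w - z⟫ ≤ ε)
    (hpC : p ∈ C) (hp : ∀ w ∈ C, ⟪y - p, w - p⟫ ≤ 0) :
    ‖z - p‖ ≤ ‖x - y‖ + Real.sqrt ε := by
  have h1 : ⟪x - z, p - z⟫ ≤ ε := hz p hpC
  have h2 : ⟪y - p, z - p⟫ ≤ 0 := hp z hzC
  have hcs : ⟪x - y, z - p⟫ ≤ ‖x - y‖ * ‖z - p‖ := real_inner_le_norm _ _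
  have hdecomp : z - p = (z - x) + ((x - y) + (y - p)) := by abel
  have hself : ⟪z - p, z - p⟫ = ‖z - p‖ ^ 2 := real_inner_self_eq_norm_sq _
  have key : ‖z - p‖ ^ 2 ≤ ε + ‖x - y‖ * ‖z - p‖ := by
    have h3 : ⟪z - x, z - p⟫ = ⟪x - z, p - z⟫ := by
      rw [show z - x = -(x - z) by abel, show z - p = -(p - z) by abel,
        inner_neg_neg]
    have hexp : ⟪z - p, z - p⟫ = ⟪z - x, z - p⟫ + (⟪x - y, z - p⟫ + ⟪y - p, z - p⟫) := by
      conv_lhs => rw [hdecomp]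
      rw [inner_add_left, inner_add_left, ← hdecomp]
    rw [hself] at hexp
    linarith [hexp.le, hexp.ge]
  nlinarith [Real.sq_sqrt hε, Real.sqrt_nonneg ε, norm_nonneg (x - y),
    norm_nonneg (z - p), sq_nonneg (‖z - p‖ - Real.sqrt ε)]
end

section
/- Let V be an m×n matrix, μ > 0, g ∈ ℝᵐ, r ∈ ℝⁿ. If d solves (VᵀV + μI_n)d = −Vᵀg + r and d̄ = −(VᵀV + μI_n)^{-1}Vᵀg, then ‖Vd + g‖ ≤ ‖Vd̄ + g‖ + ‖V‖·‖r‖/μ. -/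
/-! The error `e = d - dbar` solves `(VᵀV + μ I) e = r`, and
`⟪(VᵀV + μ I) e, e⟫ ≥ μ ‖e‖²` gives `‖e‖ ≤ ‖r‖ / μ`; the triangle inequality
for `V d + g = (V dbar + g) + V e` finishes. -/

open ContinuousLinearMap

section RegularizedNormalOperator

variable {E F : Type*} [NormedAddCommGroup E] [InnerProductSpace ℝ E] [CompleteSpace E]
  [NormedAddCommGroup F] [InnerProductSpace ℝ F] [CompleteSpace F]

theorem inner_adjoint_comp_add_smul_id_apply_self (V : E →L[ℝ] F) (μ : ℝ) (e : E) :
    inner ℝ ((adjoint V ∘L V + μ • ContinuousLinearMap.id ℝ E) e) e =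
      ‖V e‖ ^ 2 + μ * ‖e‖ ^ 2 := by
  rw [add_apply, comp_apply, smul_apply, id_apply, inner_add_left, adjoint_inner_left,
    real_inner_smul_left, real_inner_self_eq_norm_sq, real_inner_self_eq_norm_sq]

theorem mul_norm_le_norm_adjoint_comp_add_smul_id_apply (V : E →L[ℝ] F) (μ : ℝ) (e : E) :
    μ * ‖e‖ ≤ ‖(adjoint V ∘L V + μ • ContinuousLinearMap.id ℝ E) e‖ := by
  rcases (norm_nonneg e).eq_or_lt with he | he
  · rw [← he, mul_zero]
    exact norm_nonneg _
  refine le_of_mul_le_mul_right ?_ he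
  calc μ * ‖e‖ * ‖e‖ ≤ ‖V e‖ ^ 2 + μ * ‖e‖ ^ 2 := by
        nlinarith [sq_nonneg ‖V e‖]
    _ = inner ℝ ((adjoint V ∘L V + μ • ContinuousLinearMap.id ℝ E) e) e :=
      (inner_adjoint_comp_add_smul_id_apply_self V μ e).symm
    _ ≤ _ := real_inner_le_norm _ _

end RegularizedNormalOperator

theorem inexact_residual_norm_bound (n m : ℕ)
    (V : EuclideanSpace ℝ (Fin n) →L[ℝ] EuclideanSpace ℝ (Fin m))
    (μ : ℝ) (hμ : 0 < μ) (g : EuclideanSpace ℝ (Fin m))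
    (r d dbar : EuclideanSpace ℝ (Fin n))
    (hd : ((ContinuousLinearMap.adjoint V).comp V
        + μ • ContinuousLinearMap.id ℝ (EuclideanSpace ℝ (Fin n))) d
        = -(ContinuousLinearMap.adjoint V) g + r)
    (hdbar : ((ContinuousLinearMap.adjoint V).comp V
        + μ • ContinuousLinearMap.id ℝ (EuclideanSpace ℝ (Fin n))) dbar
        = -(ContinuousLinearMap.adjoint V) g) :
    ‖V d + g‖ ≤ ‖V dbar + g‖ + ‖V‖ * ‖r‖ / μ := by
  have herr :
      (adjoint V ∘L V + μ • ContinuousLinearMap.id ℝ (EuclideanSpace ℝ (Fin n)))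
        (d - dbar) = r := by
    rw [map_sub, hd, hdbar]
    abel
  have hsplit : V d + g = (V dbar + g) + V (d - dbar) := by
    rw [map_sub]
    abel
  have herr_le : ‖d - dbar‖ ≤ ‖r‖ / μ := by
    rw [le_div_iff₀ hμ, mul_comm, ← herr]
    exact mul_norm_le_norm_adjoint_comp_add_smul_id_apply V μ _
  calc ‖V d + g‖ ≤ ‖V dbar + g‖ + ‖V (d - dbar)‖ := hsplit ▸ norm_add_le _ _
    _ ≤ ‖V dbar + g‖ + ‖V‖ * (‖r‖ / μ) := by
      gcongr
      exact V.le_opNorm_of_le herr_le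
    _ = ‖V dbar + g‖ + ‖V‖ * ‖r‖ / μ := by rw [mul_div_assoc]
end
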